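/- arXiv:2304.13473 — 2 statements merged into one kernel-verified Lean document; each statement's English description precedes it below -/
import Mathlib

section
/- Let R be a locally unital ring with multiplier ring M(R) = End_{Mod-R}(R) (endomorphisms of R as a right R-module). Then the category of non-degenerate left R-modules is equivalent to the full subcategory of left M(R)-modules A satisfying R·A = A. -/
universe u

/-- A (possibly non-unital) ring is locally unital if every finite set of elements
admits a common two-sided idempotent local unit. -/
def LocallyUnital (R : Type u) [NonUnitalRing R] : Prop :=
  ∀ s : Finset R, ∃ e : R, e * e = e ∧ ∀ x ∈ s, e * x = x ∧ x * e = x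

/-- A left module over a possibly non-unital ring. -/
structure LMod (R : Type u) [NonUnitalRing R] : Type (u + 1) where
  carrier : Type u
  [grp : AddCommGroup carrier]
  smul : R → carrier → carrier
  smul_add : ∀ r a b, smul r (a + b) = smul r a + smul r b
  add_smul : ∀ r s a, smul (r + s) a = smul r a + smul s a
  mul_smul : ∀ r s a, smul (r * s) a = smul r (smul s a)

attribute [instance] LMod.grp

/-- Non-degeneracy: RM = M, i.e. every element is a sum of elements r • m. -/
def LMod.Nondeg {R : Type u} [NonUnitalRing R] (M : LMod R) : Prop :=
  ∀ a : M.carrier, a ∈ AddSubgroup.closure {x : M.carrier | ∃ r b, x = M.smul r b}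

/-- Homomorphisms of left modules. -/
def LModHom {R : Type u} [NonUnitalRing R] (M N : LMod R) :=
  {f : M.carrier → N.carrier //
    (∀ a b, f (a + b) = f a + f b) ∧ ∀ r a, f (M.smul r a) = N.smul r (f a)}

/-- A module is projective if every map out of it lifts through surjections
(of non-degenerate modules). -/
def IsProjective {R : Type u} [NonUnitalRing R] (P : LMod R) : Prop :=
  ∀ M N : LMod R, M.Nondeg → N.Nondeg →
    ∀ f : LModHom M N, Function.Surjective f.1 →
      ∀ g : LModHom P N, ∃ h : LModHom P M, ∀ p, f.1 (h.1 p) = g.1 p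

/-- The additive subgroup Re = { r * e : r ∈ R } of R. -/
def ReSub (R : Type u) [NonUnitalRing R] (e : R) : AddSubgroup R where
  carrier := {x : R | ∃ r : R, r * e = x}
  add_mem' := by rintro a b ⟨r, rfl⟩ ⟨s, rfl⟩; exact ⟨r + s, by rw [add_mul]⟩
  zero_mem' := ⟨0, zero_mul e⟩
  neg_mem' := by rintro a ⟨r, rfl⟩; exact ⟨-r, by rw [neg_mul]⟩

/-- The left R-module Re. -/
def ReMod (R : Type u) [NonUnitalRing R] (e : R) : LMod R where
  carrier := ↥(ReSub R e)
  smul r x := ⟨r * x.1, by obtain ⟨s, hs⟩ := x.2; exact ⟨r * s, by rw [mul_assoc, hs]⟩⟩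
  smul_add := by intro r a b; apply Subtype.ext; simp [mul_add]
  add_smul := by intro r s a; apply Subtype.ext; simp [add_mul]
  mul_smul := by intro r s a; apply Subtype.ext; simp [mul_assoc]

open CategoryTheory

/-- The multiplier ring M(R) = End(R_R): additive endomorphisms of R commuting with
right multiplication, as a subring of the additive endomorphism ring. -/
def MultRing (R : Type u) [NonUnitalRing R] : Subring (AddMonoid.End R) where
  carrier := {φ : AddMonoid.End R | ∀ r s : R, φ (r * s) = φ r * s}
  add_mem' := by
    intro φ ψ hφ hψ r s
    show (φ + ψ) (r * s) = (φ + ψ) r * s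
    show φ (r * s) + ψ (r * s) = (φ r + ψ r) * s
    rw [hφ, hψ, add_mul]
  zero_mem' := by
    intro r s
    show (0 : AddMonoid.End R) (r * s) = (0 : AddMonoid.End R) r * s
    simp
  neg_mem' := by
    intro φ hφ r s
    show (-φ) (r * s) = (-φ) r * s
    show -(φ (r * s)) = -(φ r) * s
    rw [hφ, neg_mul]
  one_mem' := by intro r s; rfl
  mul_mem' := by
    intro φ ψ hφ hψ r s
    show φ (ψ (r * s)) = φ (ψ r) * s
    rw [hψ r s, hφ (ψ r) s]

/-- The canonical embedding of R into its multiplier ring, by left multiplication. -/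
def multOf (R : Type u) [NonUnitalRing R] (r : R) : ↥(MultRing R) :=
  ⟨AddMonoidHom.mulLeft r, by intro x s; exact (mul_assoc r x s).symm⟩

/-- The category of non-degenerate left R-modules. -/
structure NLMod (R : Type u) [NonUnitalRing R] : Type (u + 1) where
  M : LMod R
  nd : M.Nondeg

instance (R : Type u) [NonUnitalRing R] : Category (NLMod R) where
  Hom X Y := LModHom X.M Y.M
  id X := ⟨id, fun _ _ => rfl, fun _ _ => rfl⟩
  comp f g := ⟨g.1 ∘ f.1,
    fun a b => by simp [Function.comp, f.2.1 a b, g.2.1],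
    fun r a => by simp [Function.comp, f.2.2 r a, g.2.2]⟩
  id_comp f := Subtype.ext rfl
  comp_id f := Subtype.ext rfl
  assoc f g h := Subtype.ext rfl

/-- The full subcategory of left M(R)-modules A with R·A = A. -/
structure MRMod (R : Type u) [NonUnitalRing R] : Type (u + 1) where
  A : Type u
  [grp : AddCommGroup A]
  [mod : Module (↥(MultRing R)) A]
  nd : ∀ a : A, a ∈ AddSubgroup.closure {x : A | ∃ (r : R) (b : A), x = multOf R r • b}

attribute [instance] MRMod.grp MRMod.mod

instance (R : Type u) [NonUnitalRing R] : Category (MRMod R) where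
  Hom X Y := X.A →ₗ[↥(MultRing R)] Y.A
  id X := LinearMap.id
  comp f g := g.comp f
  id_comp f := LinearMap.comp_id f
  comp_id f := LinearMap.id_comp f
  assoc f g h := rfl

namespace Stmt3Aux

variable {R : Type u} [NonUnitalRing R]

lemma lmod_smul_zero (M : LMod R) (r : R) : M.smul r 0 = 0 := by
  have h := M.smul_add r 0 0
  rw [add_zero] at h
  have h2 : M.smul r 0 + 0 = M.smul r 0 + M.smul r 0 := by rw [add_zero]; exact h
  exact (add_left_cancel h2).symm

lemma lmod_smul_neg (M : LMod R) (r : R) (a : M.carrier) :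
    M.smul r (-a) = -(M.smul r a) := by
  have h := M.smul_add r a (-a)
  rw [add_neg_cancel, lmod_smul_zero] at h
  exact (neg_eq_of_add_eq_zero_right h.symm).symm

/-- Common local unit acting as identity on two module elements. -/
lemma exists_unit_pair (hR : LocallyUnital R) (M : LMod R) {a b : M.carrier}
    {e f : R} (he : M.smul e a = a) (hf : M.smul f b = b) :
    ∃ g : R, M.smul g a = a ∧ M.smul g b = b := by
  classical
  obtain ⟨g, -, hg⟩ := hR {e, f}
  have hge : g * e = e := (hg e (by simp)).1
  have hgf : g * f = f := (hg f (by simp)).1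
  refine ⟨g, ?_, ?_⟩
  · rw [← he, ← M.mul_smul, hge]
  · rw [← hf, ← M.mul_smul, hgf]

/-- Every element of a nondegenerate module has a local unit. -/
lemma exists_unit (hR : LocallyUnital R) (M : LMod R) (hM : M.Nondeg)
    (a : M.carrier) : ∃ e : R, M.smul e a = a := by
  refine AddSubgroup.closure_induction (p := fun x _ => ∃ e : R, M.smul e x = x)
    ?_ ?_ ?_ ?_ (hM a)
  · rintro x ⟨r, b, rfl⟩
    obtain ⟨e, -, he⟩ := hR {r}
    exact ⟨e, by rw [← M.mul_smul, (he r (by simp)).1]⟩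
  · exact ⟨0, lmod_smul_zero M 0⟩
  · rintro x y - - ⟨e, he⟩ ⟨f, hf⟩
    obtain ⟨g, hg1, hg2⟩ := exists_unit_pair hR M he hf
    exact ⟨g, by rw [M.smul_add, hg1, hg2]⟩
  · rintro x - ⟨e, he⟩
    exact ⟨e, by rw [lmod_smul_neg, he]⟩

/-- The action of a multiplier on a nondegenerate module. -/
noncomputable def mact (hR : LocallyUnital R) (M : LMod R) (hM : M.Nondeg)
    (φ : ↥(MultRing R)) (a : M.carrier) : M.carrier :=
  M.smul (φ.1 (Classical.choose (exists_unit hR M hM a))) a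

lemma mact_eq (hR : LocallyUnital R) (M : LMod R) (hM : M.Nondeg)
    (φ : ↥(MultRing R)) {a : M.carrier} {e : R} (he : M.smul e a = a) :
    mact hR M hM φ a = M.smul (φ.1 e) a := by
  classical
  set f := Classical.choose (exists_unit hR M hM a) with hfdef
  have hf : M.smul f a = a := Classical.choose_spec (exists_unit hR M hM a)
  obtain ⟨g, -, hg⟩ := hR {e, f}
  have hge : g * e = e := (hg e (by simp)).1
  have hgf : g * f = f := (hg f (by simp)).1
  have key : ∀ x : R, g * x = x → M.smul x a = a → M.smul (φ.1 x) a = M.smul (φ.1 g) a := by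
    intro x hgx hx
    rw [← hgx, φ.2 g x, M.mul_smul, hx]
  rw [mact, ← hfdef, key f hgf hf, key e hge he]

lemma mact_multOf (hR : LocallyUnital R) (M : LMod R) (hM : M.Nondeg)
    (r : R) (a : M.carrier) : mact hR M hM (multOf R r) a = M.smul r a := by
  obtain ⟨e, he⟩ := exists_unit hR M hM a
  rw [mact_eq hR M hM _ he]
  show M.smul (r * e) a = M.smul r a
  rw [M.mul_smul, he]

/-- The M(R)-module structure on a nondegenerate R-module. -/
noncomputable def mactModule (hR : LocallyUnital R) (M : LMod R) (hM : M.Nondeg) :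
    Module (↥(MultRing R)) M.carrier where
  smul := mact hR M hM
  one_smul a := by
    obtain ⟨e, he⟩ := exists_unit hR M hM a
    show mact hR M hM 1 a = a
    rw [mact_eq hR M hM _ he]; exact he
  mul_smul φ ψ a := by
    show mact hR M hM (φ * ψ) a = mact hR M hM φ (mact hR M hM ψ a)
    obtain ⟨e, he⟩ := exists_unit hR M hM a
    obtain ⟨f, -, hf⟩ := hR {ψ.1 e}
    have hfe : f * ψ.1 e = ψ.1 e := (hf _ (by simp)).1
    have h1 : M.smul f (M.smul (ψ.1 e) a) = M.smul (ψ.1 e) a := by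
      rw [← M.mul_smul, hfe]
    rw [mact_eq hR M hM ψ he, mact_eq hR M hM φ h1, mact_eq hR M hM _ he,
      ← M.mul_smul]
    show M.smul (φ.1 (ψ.1 e)) a = _
    rw [← hfe, φ.2 f (ψ.1 e), hfe]
  smul_zero φ := by
    show mact hR M hM φ 0 = 0
    rw [mact_eq hR M hM φ (lmod_smul_zero M 0), lmod_smul_zero]
  smul_add φ a b := by
    show mact hR M hM φ (a + b) = mact hR M hM φ a + mact hR M hM φ b
    obtain ⟨e, he⟩ := exists_unit hR M hM a
    obtain ⟨f, hf⟩ := exists_unit hR M hM b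
    obtain ⟨g, hg1, hg2⟩ := exists_unit_pair hR M he hf
    have hab : M.smul g (a + b) = a + b := by rw [M.smul_add, hg1, hg2]
    rw [mact_eq hR M hM φ hab, mact_eq hR M hM φ hg1, mact_eq hR M hM φ hg2,
      M.smul_add]
  add_smul φ ψ a := by
    show mact hR M hM (φ + ψ) a = mact hR M hM φ a + mact hR M hM ψ a
    obtain ⟨e, he⟩ := exists_unit hR M hM a
    rw [mact_eq hR M hM _ he, mact_eq hR M hM φ he, mact_eq hR M hM ψ he]
    show M.smul (φ.1 e + ψ.1 e) a = _
    rw [M.add_smul]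
  zero_smul a := by
    show mact hR M hM 0 a = 0
    obtain ⟨e, he⟩ := exists_unit hR M hM a
    rw [mact_eq hR M hM _ he]
    show M.smul 0 a = 0
    have h := M.add_smul 0 0 a
    rw [add_zero] at h
    have h2 : M.smul 0 a + 0 = M.smul 0 a + M.smul 0 a := by rw [add_zero]; exact h
    exact (add_left_cancel h2).symm

lemma multOf_apply (hR : LocallyUnital R) (φ : ↥(MultRing R)) (e : R) :
    multOf R (φ.1 e) = φ * multOf R e := by
  apply Subtype.ext
  apply AddMonoidHom.ext
  intro x
  show φ.1 e * x = φ.1 (e * x)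
  exact (φ.2 e x).symm

/-- Object part of the functor from nondegenerate R-modules to M(R)-modules. -/
noncomputable def FObj (hR : LocallyUnital R) (X : NLMod R) : MRMod R :=
    { A := X.M.carrier
      grp := X.M.grp
      mod := mactModule hR X.M X.nd
      nd := by
        intro a
        have hset : {x : X.M.carrier | ∃ (r : R) (b : X.M.carrier),
            x = mact hR X.M X.nd (multOf R r) b}
            = {x : X.M.carrier | ∃ r b, x = X.M.smul r b} := by
          ext x
          constructor
          · rintro ⟨r, b, rfl⟩
            exact ⟨r, b, mact_multOf hR X.M X.nd r b⟩
          · rintro ⟨r, b, rfl⟩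
            exact ⟨r, b, (mact_multOf hR X.M X.nd r b).symm⟩
        show a ∈ AddSubgroup.closure {x : X.M.carrier | ∃ (r : R) (b : X.M.carrier),
            x = mact hR X.M X.nd (multOf R r) b}
        rw [hset]
        exact X.nd a }

/-- Functor from nondegenerate R-modules to M(R)-modules. -/
noncomputable def F (hR : LocallyUnital R) : NLMod R ⥤ MRMod R where
  obj X := FObj hR X
  map {X Y} f :=
    { toFun := f.1
      map_add' := f.2.1
      map_smul' := by
        intro φ a
        show f.1 (mact hR X.M X.nd φ a) = mact hR Y.M Y.nd φ (f.1 a)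
        obtain ⟨e, he⟩ := exists_unit hR X.M X.nd a
        have he' : Y.M.smul e (f.1 a) = f.1 a := by have h0 := f.2.2 e a; rw [he] at h0; exact h0.symm
        rw [mact_eq hR X.M X.nd φ he, mact_eq hR Y.M Y.nd φ he']; exact f.2.2 _ _ }
  map_id X := rfl
  map_comp f g := rfl

/-- Functor from M(R)-modules to nondegenerate R-modules. -/
def G (hR : LocallyUnital R) : MRMod R ⥤ NLMod R where
  obj A :=
    { M :=
      { carrier := A.A
        grp := A.grp
        smul := fun r a => multOf R r • a
        smul_add := fun r a b => smul_add (multOf R r) a b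
        add_smul := by
          intro r s a
          have h : multOf R (r + s) = multOf R r + multOf R s := by
            apply Subtype.ext; apply AddMonoidHom.ext; intro x
            exact add_mul r s x
          show multOf R (r + s) • a = multOf R r • a + multOf R s • a
          rw [h, add_smul]
        mul_smul := by
          intro r s a
          have h : multOf R (r * s) = multOf R r * multOf R s := by
            apply Subtype.ext; apply AddMonoidHom.ext; intro x
            exact mul_assoc r s x
          show multOf R (r * s) • a = multOf R r • (multOf R s • a)
          rw [h, mul_smul] }
      nd := A.nd }
  map {X Y} f := ⟨f.toFun, f.map_add', fun r a => f.map_smul' (multOf R r) a⟩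
  map_id X := rfl
  map_comp f g := rfl

end Stmt3Aux

/-- for a locally unital ring R, the category of non-degenerate left
R-modules is equivalent to the full subcategory of left M(R)-modules A with R·A = A. -/
theorem stmt_3 (R : Type u) [NonUnitalRing R] (hR : LocallyUnital R) :
    Nonempty (NLMod R ≌ MRMod R) := by
  classical
  refine ⟨CategoryTheory.Equivalence.mk (Stmt3Aux.F hR) (Stmt3Aux.G hR) ?_ ?_⟩
  · -- unit : 𝟭 (NLMod R) ≅ F ⋙ G
    refine NatIso.ofComponents (fun X => ?_) (fun {X Y} f => ?_)
    · refine ⟨⟨id, fun _ _ => rfl, ?_⟩, ⟨id, fun _ _ => rfl, ?_⟩,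
        Subtype.ext rfl, Subtype.ext rfl⟩
      · intro r a
        exact (Stmt3Aux.mact_multOf hR X.M X.nd r a).symm
      · intro r a
        exact Stmt3Aux.mact_multOf hR X.M X.nd r a
    · exact Subtype.ext (funext fun a => rfl)
  · -- counit : G ⋙ F ≅ 𝟭 (MRMod R)
    refine NatIso.ofComponents (fun A => ?_) (fun {X Y} f => ?_)
    · have key : ∀ (φ : ↥(MultRing R)) (a : A.A),
          Stmt3Aux.mact hR ((Stmt3Aux.G hR).obj A).M ((Stmt3Aux.G hR).obj A).nd φ a
            = φ • a := by
        intro φ a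
        obtain ⟨e, he⟩ := Stmt3Aux.exists_unit hR ((Stmt3Aux.G hR).obj A).M
          ((Stmt3Aux.G hR).obj A).nd a
        rw [Stmt3Aux.mact_eq hR _ _ φ he]
        show multOf R (φ.1 e) • a = φ • a
        rw [Stmt3Aux.multOf_apply hR φ e, mul_smul,
          show (multOf R e • a : A.A) = a from he]
      refine ⟨⟨⟨id, fun _ _ => rfl⟩, key⟩,
        ⟨⟨id, fun _ _ => rfl⟩, fun φ a => (key φ a).symm⟩, ?_, ?_⟩
      · exact LinearMap.ext fun _ => rfl
      · exact LinearMap.ext fun _ => rfl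
    · exact LinearMap.ext fun _ => rfl
end

section
/- Let G be an ample groupoid. The convolution product on Z[G] (the span of compactly supported integer-valued continuous functions on open Hausdorff subsets of G), given by (ξ * η)(g) = Σ_{h ∈ G_{r(g)}} ξ(h⁻¹) η(hg), makes Z[G] into an associative ring. -/
universe u v

open Function

/-- f is a compactly supported continuous ℤ-valued function on some open Hausdorff
subset U (extended by zero). -/
def IsCc {X : Type u} [TopologicalSpace X] (f : X → ℤ) : Prop :=
  ∃ U : Set X, IsOpen U ∧ T2Space U ∧ Continuous (fun x : U => f x) ∧
    IsCompact (support f) ∧ support f ⊆ U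

/-- ℤ[X]: the span of the groups C_c(U, ℤ) over all open Hausdorff subsets U of X. -/
def ZSpan (X : Type u) [TopologicalSpace X] : AddSubgroup (X → ℤ) :=
  AddSubgroup.closure {f | IsCc f}

/-- Elements of ℤ[X] supported in a subset S. -/
def ZSpanOn (X : Type u) [TopologicalSpace X] (S : Set X) : AddSubgroup (X → ℤ) where
  carrier := {f | f ∈ ZSpan X ∧ support f ⊆ S}
  add_mem' := by
    rintro f g ⟨hf, hf'⟩ ⟨hg, hg'⟩
    exact ⟨add_mem hf hg, subset_trans (support_add f g) (Set.union_subset hf' hg')⟩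
  zero_mem' := ⟨zero_mem _, by simp⟩
  neg_mem' := by
    rintro f ⟨hf, hf'⟩
    exact ⟨neg_mem hf, fun x hx => hf' (by simpa using hx)⟩

/-- A locally locally-compact-Hausdorff space: every point has an open Hausdorff
locally compact neighbourhood. -/
def LocallyLCH (X : Type u) [TopologicalSpace X] : Prop :=
  ∀ x : X, ∃ U : Set X, IsOpen U ∧ x ∈ U ∧ T2Space U ∧ LocallyCompactSpace U

/-- An ample groupoid: an étale groupoid (possibly non-Hausdorff arrow space) whose
unit space is locally compact Hausdorff and totally disconnected.  Arrows g, h are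
composable when s g = r h. -/
structure AmpleGroupoid (G : Type u) [TopologicalSpace G] where
  s : G → G
  r : G → G
  inv : G → G
  mul : (g h : G) → s g = r h → G
  s_s : ∀ g, s (s g) = s g
  r_s : ∀ g, r (s g) = s g
  s_r : ∀ g, s (r g) = r g
  r_r : ∀ g, r (r g) = r g
  r_mul : ∀ g h hc, r (mul g h hc) = r g
  s_mul : ∀ g h hc, s (mul g h hc) = s h
  mul_assoc : ∀ g h k (hgh : s g = r h) (hhk : s h = r k),
    mul (mul g h hgh) k ((s_mul g h hgh).trans hhk)
      = mul g (mul h k hhk) (hgh.trans (r_mul h k hhk).symm)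
  mul_unit : ∀ g, mul g (s g) (r_s g).symm = g
  unit_mul : ∀ g, mul (r g) g (s_r g) = g
  s_inv : ∀ g, s (inv g) = r g
  r_inv : ∀ g, r (inv g) = s g
  mul_inv : ∀ g, mul g (inv g) (r_inv g).symm = r g
  inv_mul : ∀ g, mul (inv g) g (s_inv g) = s g
  continuous_inv : Continuous inv
  etale_s : IsLocalHomeomorph s
  etale_r : IsLocalHomeomorph r
  continuous_mul : Continuous (fun p : {p : G × G // s p.1 = r p.2} => mul p.1.1 p.1.2 p.2)
  t2_units : T2Space {x : G // s x = x}
  lch_units : LocallyCompactSpace {x : G // s x = x}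
  td_units : TotallyDisconnectedSpace {x : G // s x = x}

variable {G : Type u} [TopologicalSpace G]

/-- The unit space of the groupoid, as a subset of the arrows. -/
def AmpleGroupoid.units (𝒢 : AmpleGroupoid G) : Set G := {x : G | 𝒢.s x = x}

/-- Push-forward of ℤ-valued functions along a (local homeo) map, by summation
over fibres. -/
noncomputable def push {α : Type u} {β : Type v} (f : α → β) (ξ : α → ℤ) : β → ℤ :=
  fun y => ∑ᶠ x : {x : α // f x = y}, ξ x.1

/-- The formula for the left action of ℤ[G] on ℤ[W] for a left G-space W with anchor
ρ and action a:  (ξ · m)(w) = Σ_{g ∈ G_{ρ(w)}} ξ(g⁻¹) m(g·w). -/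
noncomputable def lactGen (𝒢 : AmpleGroupoid G) {W : Type v} (ρ : W → G)
    (a : (g : G) → (w : W) → 𝒢.s g = ρ w → W) (ξ : G → ℤ) (m : W → ℤ) : W → ℤ :=
  fun w => ∑ᶠ g : {g : G // 𝒢.s g = ρ w}, ξ (𝒢.inv g.1) * m (a g.1 w g.2)

/-- The formula for the right action of ℤ[G] on ℤ[W] for a right G-space W with anchor
σ and action a:  (m · ξ)(w) = Σ_{g ∈ G^{σ(w)}} m(w·g) ξ(g⁻¹). -/
noncomputable def ractGen (𝒢 : AmpleGroupoid G) {W : Type v} (σ : W → G)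
    (a : (w : W) → (g : G) → σ w = 𝒢.r g → W) (m : W → ℤ) (ξ : G → ℤ) : W → ℤ :=
  fun w => ∑ᶠ g : {g : G // σ w = 𝒢.r g}, m (a w g.1 g.2) * ξ (𝒢.inv g.1)

/-- Convolution on ℤ[G]: (ξ * η)(g) = Σ_{h ∈ G_{r(g)}} ξ(h⁻¹) η(h g). -/
noncomputable def conv (𝒢 : AmpleGroupoid G) (ξ η : G → ℤ) : G → ℤ :=
  lactGen 𝒢 𝒢.r (fun h g hc => 𝒢.mul h g hc) ξ η

/-- The right action of ℤ[G] on the trivial right module ℤ[G⁰]: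
(m · ξ)(u) = Σ_{g ∈ G^u} m(s g) ξ(g⁻¹). -/
noncomputable def ract0 (𝒢 : AmpleGroupoid G) (m ξ : G → ℤ) : G → ℤ :=
  ractGen 𝒢 id (fun _ g _ => 𝒢.s g) m ξ

/-! ### Auxiliary development -/

namespace AmpleGroupoid

variable {𝒢 : AmpleGroupoid G}

open scoped Classical in
/-- Total multiplication function: junk value when not composable. -/
noncomputable def mul' (𝒢 : AmpleGroupoid G) (g h : G) : G :=
  if hc : 𝒢.s g = 𝒢.r h then 𝒢.mul g h hc else g

theorem mul'_neg {g h : G} (hc : ¬ (𝒢.s g = 𝒢.r h)) : 𝒢.mul' g h = g := by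
  rw [mul']; exact dif_neg hc

theorem mul'_def {g h : G} (hc : 𝒢.s g = 𝒢.r h) : 𝒢.mul' g h = 𝒢.mul g h hc := by
  rw [mul']; exact dif_pos hc

theorem r_mul' {g h : G} (hc : 𝒢.s g = 𝒢.r h) : 𝒢.r (𝒢.mul' g h) = 𝒢.r g := by
  rw [mul'_def hc]; exact 𝒢.r_mul g h hc

theorem s_mul' {g h : G} (hc : 𝒢.s g = 𝒢.r h) : 𝒢.s (𝒢.mul' g h) = 𝒢.s h := by
  rw [mul'_def hc]; exact 𝒢.s_mul g h hc

theorem r_mul'_any (g h : G) : 𝒢.r (𝒢.mul' g h) = 𝒢.r g := by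
  by_cases hc : 𝒢.s g = 𝒢.r h
  · exact r_mul' hc
  · rw [mul'_neg hc]

theorem mul'_assoc {g h k : G} (hgh : 𝒢.s g = 𝒢.r h) (hhk : 𝒢.s h = 𝒢.r k) :
    𝒢.mul' (𝒢.mul' g h) k = 𝒢.mul' g (𝒢.mul' h k) := by
  rw [mul'_def hgh, mul'_def hhk,
    mul'_def (show 𝒢.s (𝒢.mul g h hgh) = 𝒢.r k from (𝒢.s_mul g h hgh).trans hhk),
    mul'_def (show 𝒢.s g = 𝒢.r (𝒢.mul h k hhk) from hgh.trans (𝒢.r_mul h k hhk).symm)]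
  exact 𝒢.mul_assoc g h k hgh hhk

theorem mul'_inv (g : G) : 𝒢.mul' g (𝒢.inv g) = 𝒢.r g := by
  rw [mul'_def (𝒢.r_inv g).symm]; exact 𝒢.mul_inv g

theorem inv_mul' (g : G) : 𝒢.mul' (𝒢.inv g) g = 𝒢.s g := by
  rw [mul'_def (𝒢.s_inv g)]; exact 𝒢.inv_mul g

theorem mul'_src (g : G) : 𝒢.mul' g (𝒢.s g) = g := by
  rw [mul'_def (𝒢.r_s g).symm]; exact 𝒢.mul_unit g

theorem rng_mul' (g : G) : 𝒢.mul' (𝒢.r g) g = g := by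
  rw [mul'_def (𝒢.s_r g)]; exact 𝒢.unit_mul g

theorem inv_mul'_cancel {g h : G} (hc : 𝒢.r g = 𝒢.r h) :
    𝒢.mul' g (𝒢.mul' (𝒢.inv g) h) = h := by
  rw [← mul'_assoc (𝒢.r_inv g).symm (by rw [𝒢.s_inv]; exact hc), mul'_inv, hc, rng_mul']

theorem mul'_inv_cancel {g h : G} (hc : 𝒢.s g = 𝒢.r h) :
    𝒢.mul' (𝒢.inv g) (𝒢.mul' g h) = h := by
  rw [← mul'_assoc (𝒢.s_inv g) hc, inv_mul', hc, rng_mul']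

theorem mul'_cancel_right {g h : G} (hc : 𝒢.s g = 𝒢.r h) :
    𝒢.mul' (𝒢.mul' g h) (𝒢.inv h) = g := by
  rw [mul'_assoc hc (𝒢.r_inv h).symm, mul'_inv, ← hc, mul'_src]

theorem inv_inv' (g : G) : 𝒢.inv (𝒢.inv g) = g := by
  have h1 : 𝒢.mul' (𝒢.inv g) (𝒢.inv (𝒢.inv g)) = 𝒢.s g := by
    rw [mul'_inv, 𝒢.r_inv]
  refine Eq.symm ?_
  calc g = 𝒢.mul' g (𝒢.s g) := (mul'_src g).symm
    _ = 𝒢.mul' g (𝒢.mul' (𝒢.inv g) (𝒢.inv (𝒢.inv g))) := by rw [h1]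
    _ = 𝒢.mul' (𝒢.mul' g (𝒢.inv g)) (𝒢.inv (𝒢.inv g)) := by
        rw [mul'_assoc (𝒢.r_inv g).symm (by rw [𝒢.s_inv, 𝒢.r_inv, 𝒢.s_inv])]
    _ = 𝒢.mul' (𝒢.r g) (𝒢.inv (𝒢.inv g)) := by rw [mul'_inv]
    _ = 𝒢.inv (𝒢.inv g) := by
        rw [show 𝒢.r g = 𝒢.r (𝒢.inv (𝒢.inv g)) from by rw [𝒢.r_inv, 𝒢.s_inv], rng_mul']

theorem inv_injective : Function.Injective 𝒢.inv := by
  intro a b hab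
  rw [← inv_inv' (𝒢 := 𝒢) a, hab, inv_inv']

theorem inv_rev {g h : G} (hc : 𝒢.s g = 𝒢.r h) :
    𝒢.inv (𝒢.mul' g h) = 𝒢.mul' (𝒢.inv h) (𝒢.inv g) := by
  have hry : 𝒢.r (𝒢.mul' (𝒢.inv h) (𝒢.inv g)) = 𝒢.s h := by
    rw [r_mul' (show 𝒢.s (𝒢.inv h) = 𝒢.r (𝒢.inv g) by rw [𝒢.s_inv, 𝒢.r_inv, hc]), 𝒢.r_inv]
  have hxy : 𝒢.mul' (𝒢.mul' g h) (𝒢.mul' (𝒢.inv h) (𝒢.inv g)) = 𝒢.r (𝒢.mul' g h) := by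
    rw [mul'_assoc hc hry.symm,
      inv_mul'_cancel (show 𝒢.r h = 𝒢.r (𝒢.inv g) by rw [𝒢.r_inv, hc]), mul'_inv, r_mul' hc]
  calc 𝒢.inv (𝒢.mul' g h)
      = 𝒢.mul' (𝒢.inv (𝒢.mul' g h)) (𝒢.s (𝒢.inv (𝒢.mul' g h))) := (mul'_src _).symm
    _ = 𝒢.mul' (𝒢.inv (𝒢.mul' g h))
          (𝒢.mul' (𝒢.mul' g h) (𝒢.mul' (𝒢.inv h) (𝒢.inv g))) := by rw [hxy, 𝒢.s_inv]
    _ = 𝒢.mul' (𝒢.inv h) (𝒢.inv g) := mul'_inv_cancel (by rw [s_mul' hc, hry])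

theorem mul'_right_injOn {m : G} :
    Set.InjOn (fun g => 𝒢.mul' g m) {g | 𝒢.s g = 𝒢.r m} := by
  intro a ha b hb hab
  have := congrArg (fun x => 𝒢.mul' x (𝒢.inv m)) hab
  simpa only [mul'_cancel_right ha, mul'_cancel_right hb] using this

end AmpleGroupoid

namespace AmpleGroupoid

variable {𝒢 : AmpleGroupoid G}

/-- Convolution written with the total multiplication `mul'`. -/
noncomputable def conv' (𝒢 : AmpleGroupoid G) (ξ η : G → ℤ) : G → ℤ :=
  fun x => ∑ᶠ g ∈ {g : G | 𝒢.s g = 𝒢.r x}, ξ (𝒢.inv g) * η (𝒢.mul' g x)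

theorem conv_eq_conv' (𝒢 : AmpleGroupoid G) (ξ η : G → ℤ) :
    conv 𝒢 ξ η = 𝒢.conv' ξ η := by
  funext x
  show ∑ᶠ g : {g : G // 𝒢.s g = 𝒢.r x}, ξ (𝒢.inv g.1) * η (𝒢.mul g.1 x g.2) = _
  have h1 : ∀ g : {g : G // 𝒢.s g = 𝒢.r x},
      ξ (𝒢.inv g.1) * η (𝒢.mul g.1 x g.2) = ξ (𝒢.inv g.1) * η (𝒢.mul' g.1 x) := by
    intro g; rw [mul'_def g.2]
  exact (finsum_congr h1).trans
    (finsum_set_coe_eq_finsum_mem (f := fun g => ξ (𝒢.inv g) * η (𝒢.mul' g x))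
      {g : G | 𝒢.s g = 𝒢.r x})

/-- Functions with finite intersections of support with `r`-fibres. -/
def rFF (𝒢 : AmpleGroupoid G) (ξ : G → ℤ) : Prop :=
  ∀ u : G, {g : G | ξ g ≠ 0 ∧ 𝒢.r g = u}.Finite

/-- Functions with finite intersections of support with `s`-fibres. -/
def sFF (𝒢 : AmpleGroupoid G) (ξ : G → ℤ) : Prop :=
  ∀ u : G, {g : G | ξ g ≠ 0 ∧ 𝒢.s g = u}.Finite

theorem finite_fibers {F : G → G} (hF : IsLocalHomeomorph F) {ξ : G → ℤ}
    (hξ : ξ ∈ ZSpan G) (u : G) : {g : G | ξ g ≠ 0 ∧ F g = u}.Finite := by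
  induction hξ using AddSubgroup.closure_induction with
  | mem f hf =>
      obtain ⟨U, -, -, -, hcomp, -⟩ := hf
      have hnhds : ∀ x ∈ support f, (hF x).choose.source ∈ nhds x :=
        fun x _ => (hF x).choose.open_source.mem_nhds (hF x).choose_spec.1
      obtain ⟨t, -, ht⟩ := hcomp.elim_nhds_subcover _ hnhds
      have hsub : {g : G | f g ≠ 0 ∧ F g = u} ⊆
          ⋃ x ∈ t, {g : G | g ∈ (hF x).choose.source ∧ F g = u} := by
        rintro g ⟨hg, hgu⟩
        have hg2 := ht hg
        simp only [Set.mem_iUnion] at hg2 ⊢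
        obtain ⟨x, hx, hgx⟩ := hg2
        exact ⟨x, hx, hgx, hgu⟩
      refine Set.Finite.subset (Set.Finite.biUnion t.finite_toSet fun x _ => ?_) hsub
      apply Set.Subsingleton.finite
      rintro a ⟨ha, hau⟩ b ⟨hb, hbu⟩
      have hfe : F = (hF x).choose := (hF x).choose_spec.2
      refine (hF x).choose.injOn ha hb ?_
      rw [← hfe]
      exact hau.trans hbu.symm
  | zero =>
      convert Set.finite_empty
      ext g; simp
  | add f g hf hg ihf ihg =>
      refine Set.Finite.subset (ihf.union ihg) ?_
      rintro x ⟨hx, hxu⟩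
      rcases (by
        by_contra hcon
        push_neg at hcon
        exact hx (by simp [Pi.add_apply, hcon.1, hcon.2]) : f x ≠ 0 ∨ g x ≠ 0) with h | h
      · exact Or.inl ⟨h, hxu⟩
      · exact Or.inr ⟨h, hxu⟩
  | neg f hf ihf =>
      convert ihf using 1
      ext x; simp [neg_ne_zero]

end AmpleGroupoid

namespace AmpleGroupoid

variable {𝒢 : AmpleGroupoid G}

theorem rFF_of_mem {ξ : G → ℤ} (hξ : ξ ∈ ZSpan G) : rFF 𝒢 ξ :=
  fun u => finite_fibers 𝒢.etale_r hξ u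

theorem sFF_of_mem {ξ : G → ℤ} (hξ : ξ ∈ ZSpan G) : sFF 𝒢 ξ :=
  fun u => finite_fibers 𝒢.etale_s hξ u

theorem finite_mulset {ζ : G → ℤ} (hζ : sFF 𝒢 ζ) (m : G) :
    {g : G | 𝒢.s g = 𝒢.r m ∧ ζ (𝒢.mul' g m) ≠ 0}.Finite := by
  apply Set.Finite.of_finite_image (f := fun g => 𝒢.mul' g m)
  · refine Set.Finite.subset (hζ (𝒢.s m)) ?_
    rintro x ⟨g, ⟨hg1, hg2⟩, rfl⟩
    exact ⟨hg2, s_mul' hg1⟩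
  · exact mul'_right_injOn.mono fun g hg => hg.1
theorem finite_invset {ξ : G → ℤ} (hξ : rFF 𝒢 ξ) (u : G) :
    {h : G | 𝒢.s h = u ∧ ξ (𝒢.inv h) ≠ 0}.Finite := by
  apply Set.Finite.of_finite_image (f := 𝒢.inv)
  · refine Set.Finite.subset (hξ u) ?_
    rintro x ⟨h, ⟨hh1, hh2⟩, rfl⟩
    exact ⟨hh2, by rw [𝒢.r_inv, hh1]⟩
  · exact inv_injective.injOn

theorem conv'_add_left {ξ₁ ξ₂ : G → ℤ} (h₁ : rFF 𝒢 ξ₁) (h₂ : rFF 𝒢 ξ₂) (η : G → ℤ) :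
    𝒢.conv' (ξ₁ + ξ₂) η = 𝒢.conv' ξ₁ η + 𝒢.conv' ξ₂ η := by
  funext x
  have key : ∀ ξ : G → ℤ, rFF 𝒢 ξ →
      ({g : G | 𝒢.s g = 𝒢.r x} ∩ support fun g => ξ (𝒢.inv g) * η (𝒢.mul' g x)).Finite := by
    intro ξ hξ
    refine Set.Finite.subset (finite_invset hξ (𝒢.r x)) ?_
    rintro g ⟨hg1, hg2⟩
    rw [mem_support, mul_ne_zero_iff] at hg2
    exact ⟨hg1, hg2.1⟩
  have e1 : 𝒢.conv' (ξ₁ + ξ₂) η x = ∑ᶠ g ∈ {g : G | 𝒢.s g = 𝒢.r x},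
      ((ξ₁ (𝒢.inv g) * η (𝒢.mul' g x)) + (ξ₂ (𝒢.inv g) * η (𝒢.mul' g x))) :=
    finsum_mem_congr rfl fun g _ => by simp [add_mul]
  rw [Pi.add_apply, e1, finsum_mem_add_distrib' (key ξ₁ h₁) (key ξ₂ h₂)]
  rfl

theorem conv'_add_right {ξ : G → ℤ} (hξ : rFF 𝒢 ξ) (η₁ η₂ : G → ℤ) :
    𝒢.conv' ξ (η₁ + η₂) = 𝒢.conv' ξ η₁ + 𝒢.conv' ξ η₂ := by
  funext x
  have key : ∀ η : G → ℤ,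
      ({g : G | 𝒢.s g = 𝒢.r x} ∩ support fun g => ξ (𝒢.inv g) * η (𝒢.mul' g x)).Finite := by
    intro η
    refine Set.Finite.subset (finite_invset hξ (𝒢.r x)) ?_
    rintro g ⟨hg1, hg2⟩
    rw [mem_support, mul_ne_zero_iff] at hg2
    exact ⟨hg1, hg2.1⟩
  have e1 : 𝒢.conv' ξ (η₁ + η₂) x = ∑ᶠ g ∈ {g : G | 𝒢.s g = 𝒢.r x},
      ((ξ (𝒢.inv g) * η₁ (𝒢.mul' g x)) + (ξ (𝒢.inv g) * η₂ (𝒢.mul' g x))) :=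
    finsum_mem_congr rfl fun g _ => by simp [mul_add]
  rw [Pi.add_apply, e1, finsum_mem_add_distrib' (key η₁) (key η₂)]
  rfl

theorem conv'_zero_left (η : G → ℤ) : 𝒢.conv' 0 η = 0 := by
  funext x
  show (∑ᶠ g ∈ {g : G | 𝒢.s g = 𝒢.r x}, (0 : G → ℤ) (𝒢.inv g) * η (𝒢.mul' g x)) = 0
  simp

theorem conv'_zero_right (ξ : G → ℤ) : 𝒢.conv' ξ 0 = 0 := by
  funext x
  show (∑ᶠ g ∈ {g : G | 𝒢.s g = 𝒢.r x}, ξ (𝒢.inv g) * (0 : G → ℤ) (𝒢.mul' g x)) = 0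
  simp

theorem finsum_mem_neg {α : Type v} (S : Set α) (f : α → ℤ) :
    (∑ᶠ g ∈ S, (- f g)) = - ∑ᶠ g ∈ S, f g := by
  rw [finsum_mem_def, finsum_mem_def, ← finsum_neg_distrib]
  apply finsum_congr
  intro x
  by_cases hx : x ∈ S <;> simp [hx]

theorem conv'_neg_left (ξ η : G → ℤ) : 𝒢.conv' (-ξ) η = - 𝒢.conv' ξ η := by
  funext x
  show (∑ᶠ g ∈ {g : G | 𝒢.s g = 𝒢.r x}, (-ξ) (𝒢.inv g) * η (𝒢.mul' g x)) = _
  have : ∀ g : G, (-ξ) (𝒢.inv g) * η (𝒢.mul' g x) = - (ξ (𝒢.inv g) * η (𝒢.mul' g x)) := by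
    intro g; simp
  calc (∑ᶠ g ∈ {g : G | 𝒢.s g = 𝒢.r x}, (-ξ) (𝒢.inv g) * η (𝒢.mul' g x))
      = ∑ᶠ g ∈ {g : G | 𝒢.s g = 𝒢.r x}, - (ξ (𝒢.inv g) * η (𝒢.mul' g x)) := by
        exact finsum_mem_congr rfl fun g _ => this g
    _ = _ := finsum_mem_neg _ _

theorem conv'_neg_right (ξ η : G → ℤ) : 𝒢.conv' ξ (-η) = - 𝒢.conv' ξ η := by
  funext x
  show (∑ᶠ g ∈ {g : G | 𝒢.s g = 𝒢.r x}, ξ (𝒢.inv g) * (-η) (𝒢.mul' g x)) = _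
  have : ∀ g : G, ξ (𝒢.inv g) * (-η) (𝒢.mul' g x) = - (ξ (𝒢.inv g) * η (𝒢.mul' g x)) := by
    intro g; simp
  calc (∑ᶠ g ∈ {g : G | 𝒢.s g = 𝒢.r x}, ξ (𝒢.inv g) * (-η) (𝒢.mul' g x))
      = ∑ᶠ g ∈ {g : G | 𝒢.s g = 𝒢.r x}, - (ξ (𝒢.inv g) * η (𝒢.mul' g x)) := by
        exact finsum_mem_congr rfl fun g _ => this g
    _ = _ := finsum_mem_neg _ _

end AmpleGroupoid

namespace AmpleGroupoid

variable {𝒢 : AmpleGroupoid G}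

theorem conv'_apply (ξ η : G → ℤ) (x : G) :
    𝒢.conv' ξ η x = ∑ᶠ g ∈ {g : G | 𝒢.s g = 𝒢.r x}, ξ (𝒢.inv g) * η (𝒢.mul' g x) := rfl

theorem conv'_assoc {ξ ζ : G → ℤ} (hξ : rFF 𝒢 ξ) (hζ : sFF 𝒢 ζ) (η : G → ℤ) :
    𝒢.conv' (𝒢.conv' ξ η) ζ = 𝒢.conv' ξ (𝒢.conv' η ζ) := by
  classical
  funext w
  have hA : {g : G | 𝒢.s g = 𝒢.r w ∧ ζ (𝒢.mul' g w) ≠ 0}.Finite := finite_mulset hζ w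
  have hB : {h : G | 𝒢.s h = 𝒢.r w ∧ ξ (𝒢.inv h) ≠ 0}.Finite := finite_invset hξ (𝒢.r w)
  have hC : ∀ k : G, {l : G | 𝒢.s l = 𝒢.r k ∧ ζ (𝒢.mul' l (𝒢.mul' k w)) ≠ 0}.Finite := by
    intro k
    have h2 := finite_mulset hζ (𝒢.mul' k w)
    rw [r_mul'_any] at h2
    exact h2
  set Af : Finset G := hA.toFinset with hAf
  set Bf : Finset G := hB.toFinset with hBf
  set Cf : G → Finset G := fun k => (hC k).toFinset with hCf
  -- Left hand side
  have hL1 : 𝒢.conv' (𝒢.conv' ξ η) ζ w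
      = ∑ g ∈ Af, 𝒢.conv' ξ η (𝒢.inv g) * ζ (𝒢.mul' g w) := by
    rw [conv'_apply]
    apply finsum_mem_eq_sum_of_inter_support_eq
    ext g
    simp only [Set.mem_inter_iff, mem_support, Set.mem_setOf_eq, hAf, Finset.coe_sort_coe,
      Set.Finite.coe_toFinset, ne_eq]
    constructor
    · rintro ⟨hg1, hg2⟩
      exact ⟨⟨hg1, fun h0 => hg2 (by rw [h0, mul_zero])⟩, hg2⟩
    · rintro ⟨⟨hg1, -⟩, hg2⟩
      exact ⟨hg1, hg2⟩
  have hL2 : ∀ g ∈ Af, 𝒢.conv' ξ η (𝒢.inv g)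
      = ∑ h ∈ Bf, ξ (𝒢.inv h) * η (𝒢.mul' h (𝒢.inv g)) := by
    intro g hg
    have hgS : 𝒢.s g = 𝒢.r w := ((hA.mem_toFinset).1 hg).1
    rw [conv'_apply,
      show {h : G | 𝒢.s h = 𝒢.r (𝒢.inv g)} = {h : G | 𝒢.s h = 𝒢.r w} by rw [𝒢.r_inv, hgS]]
    apply finsum_mem_eq_sum_of_inter_support_eq
    ext h
    simp only [Set.mem_inter_iff, mem_support, Set.mem_setOf_eq, hBf, Finset.coe_sort_coe,
      Set.Finite.coe_toFinset, ne_eq]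
    constructor
    · rintro ⟨hh1, hh2⟩
      exact ⟨⟨hh1, fun h0 => hh2 (by rw [h0, zero_mul])⟩, hh2⟩
    · rintro ⟨⟨hh1, -⟩, hh2⟩
      exact ⟨hh1, hh2⟩
  have hLHS : 𝒢.conv' (𝒢.conv' ξ η) ζ w = ∑ p ∈ Af ×ˢ Bf,
      ξ (𝒢.inv p.2) * η (𝒢.mul' p.2 (𝒢.inv p.1)) * ζ (𝒢.mul' p.1 w) := by
    rw [hL1, Finset.sum_product]
    refine Finset.sum_congr rfl fun g hg => ?_
    rw [hL2 g hg, Finset.sum_mul]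
  -- Right hand side
  have hR1 : 𝒢.conv' ξ (𝒢.conv' η ζ) w
      = ∑ k ∈ Bf, ξ (𝒢.inv k) * 𝒢.conv' η ζ (𝒢.mul' k w) := by
    rw [conv'_apply]
    apply finsum_mem_eq_sum_of_inter_support_eq
    ext k
    simp only [Set.mem_inter_iff, mem_support, Set.mem_setOf_eq, hBf, Finset.coe_sort_coe,
      Set.Finite.coe_toFinset, ne_eq]
    constructor
    · rintro ⟨hk1, hk2⟩
      exact ⟨⟨hk1, fun h0 => hk2 (by rw [h0, zero_mul])⟩, hk2⟩
    · rintro ⟨⟨hk1, -⟩, hk2⟩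
      exact ⟨hk1, hk2⟩
  have hR2 : ∀ k ∈ Bf, 𝒢.conv' η ζ (𝒢.mul' k w)
      = ∑ l ∈ Cf k, η (𝒢.inv l) * ζ (𝒢.mul' l (𝒢.mul' k w)) := by
    intro k hk
    rw [conv'_apply,
      show {l : G | 𝒢.s l = 𝒢.r (𝒢.mul' k w)} = {l : G | 𝒢.s l = 𝒢.r k} by rw [r_mul'_any]]
    apply finsum_mem_eq_sum_of_inter_support_eq
    ext l
    simp only [Set.mem_inter_iff, mem_support, Set.mem_setOf_eq, hCf, Finset.coe_sort_coe,
      Set.Finite.coe_toFinset, ne_eq]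
    constructor
    · rintro ⟨hl1, hl2⟩
      exact ⟨⟨hl1, fun h0 => hl2 (by rw [h0, mul_zero])⟩, hl2⟩
    · rintro ⟨⟨hl1, -⟩, hl2⟩
      exact ⟨hl1, hl2⟩
  have hRHS : 𝒢.conv' ξ (𝒢.conv' η ζ) w = ∑ q ∈ Bf.sigma Cf,
      ξ (𝒢.inv q.1) * (η (𝒢.inv q.2) * ζ (𝒢.mul' q.2 (𝒢.mul' q.1 w))) := by
    rw [hR1, Finset.sum_sigma]
    refine Finset.sum_congr rfl fun k hk => ?_
    rw [hR2 k hk, Finset.mul_sum]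
  -- the bijection
  rw [hLHS, hRHS]
  refine Finset.sum_nbij' (fun p : G × G => (⟨p.2, 𝒢.mul' p.1 (𝒢.inv p.2)⟩ : Σ _ : G, G))
    (fun q : Σ _ : G, G => (𝒢.mul' q.2 q.1, q.1)) ?_ ?_ ?_ ?_ ?_
  · -- maps into sigma
    rintro ⟨g, h⟩ hp
    rw [Finset.mem_product] at hp
    obtain ⟨hg, hh⟩ := hp
    rw [hAf, Set.Finite.mem_toFinset] at hg
    rw [hBf, Set.Finite.mem_toFinset] at hh
    obtain ⟨hgS, hgz⟩ := hg
    obtain ⟨hhS, hhx⟩ := hh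
    have c1 : 𝒢.s g = 𝒢.r (𝒢.inv h) := by rw [𝒢.r_inv, hhS]; exact hgS
    have key1 : 𝒢.mul' (𝒢.mul' g (𝒢.inv h)) (𝒢.mul' h w) = 𝒢.mul' g w := by
      rw [mul'_assoc c1 (by rw [𝒢.s_inv, r_mul' hhS]), mul'_inv_cancel hhS]
    rw [Finset.mem_sigma]
    refine ⟨by rw [hBf, Set.Finite.mem_toFinset]; exact ⟨hhS, hhx⟩, ?_⟩
    rw [hCf]
    simp only [Set.Finite.mem_toFinset, Set.mem_setOf_eq]
    refine ⟨by rw [s_mul' c1, 𝒢.s_inv], ?_⟩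
    rw [key1]
    exact hgz
  · -- maps into product
    rintro ⟨k, l⟩ hq
    rw [Finset.mem_sigma] at hq
    obtain ⟨hk, hl⟩ := hq
    rw [hBf, Set.Finite.mem_toFinset] at hk
    rw [hCf] at hl
    simp only [Set.Finite.mem_toFinset, Set.mem_setOf_eq] at hl
    obtain ⟨hkS, hkx⟩ := hk
    obtain ⟨hlS, hlz⟩ := hl
    rw [Finset.mem_product]
    constructor
    · rw [hAf, Set.Finite.mem_toFinset]
      refine ⟨by rw [s_mul' hlS, hkS], ?_⟩
      rw [mul'_assoc hlS hkS]
      exact hlz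
    · rw [hBf, Set.Finite.mem_toFinset]
      exact ⟨hkS, hkx⟩
  · -- left inverse
    rintro ⟨g, h⟩ hp
    rw [Finset.mem_product] at hp
    obtain ⟨hg, hh⟩ := hp
    rw [hAf, Set.Finite.mem_toFinset] at hg
    rw [hBf, Set.Finite.mem_toFinset] at hh
    have c1 : 𝒢.s g = 𝒢.r (𝒢.inv h) := by rw [𝒢.r_inv, hh.1]; exact hg.1
    have : 𝒢.mul' (𝒢.mul' g (𝒢.inv h)) h = g := by
      rw [mul'_assoc c1 (by rw [𝒢.s_inv]), inv_mul', hh.1, ← hg.1, mul'_src]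
    simp only [this]
  · -- right inverse
    rintro ⟨k, l⟩ hq
    rw [Finset.mem_sigma] at hq
    obtain ⟨hk, hl⟩ := hq
    rw [hCf] at hl
    simp only [Set.Finite.mem_toFinset, Set.mem_setOf_eq] at hl
    have : 𝒢.mul' (𝒢.mul' l k) (𝒢.inv k) = l := mul'_cancel_right hl.1
    simp only [this]
  · -- terms agree
    rintro ⟨g, h⟩ hp
    rw [Finset.mem_product] at hp
    obtain ⟨hg, hh⟩ := hp
    rw [hAf, Set.Finite.mem_toFinset] at hg
    rw [hBf, Set.Finite.mem_toFinset] at hh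
    have c1 : 𝒢.s g = 𝒢.r (𝒢.inv h) := by rw [𝒢.r_inv, hh.1]; exact hg.1
    have key1 : 𝒢.mul' (𝒢.mul' g (𝒢.inv h)) (𝒢.mul' h w) = 𝒢.mul' g w := by
      rw [mul'_assoc c1 (by rw [𝒢.s_inv, r_mul' hh.1]), mul'_inv_cancel hh.1]
    show ξ (𝒢.inv h) * η (𝒢.mul' h (𝒢.inv g)) * ζ (𝒢.mul' g w)
      = ξ (𝒢.inv h) * (η (𝒢.inv (𝒢.mul' g (𝒢.inv h)))
          * ζ (𝒢.mul' (𝒢.mul' g (𝒢.inv h)) (𝒢.mul' h w)))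
    rw [inv_rev c1, inv_inv', key1, _root_.mul_assoc]

end AmpleGroupoid

/-- Indicator function with value 1. -/
noncomputable def ind (A : Set G) : G → ℤ := A.indicator 1

theorem ind_of_mem {A : Set G} {x : G} (hx : x ∈ A) : ind A x = 1 :=
  Set.indicator_of_mem hx 1

theorem ind_of_not_mem {A : Set G} {x : G} (hx : x ∉ A) : ind A x = 0 :=
  Set.indicator_of_notMem hx 1

theorem supp_ind (A : Set G) : support (ind A) = A := by
  ext x
  by_cases hx : x ∈ A
  · simp [mem_support, ind_of_mem hx, hx]
  · simp [mem_support, ind_of_not_mem hx, hx]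

namespace AmpleGroupoid

variable {𝒢 : AmpleGroupoid G}

theorem t2_of_injOn_r {S : Set G} (hS : Set.InjOn 𝒢.r S) : T2Space S := by
  haveI := 𝒢.t2_units
  refine T2Space.of_injective_continuous
    (f := fun z : S => (⟨𝒢.r z.1, 𝒢.s_r z.1⟩ : {x : G // 𝒢.s x = x})) ?_ ?_
  · intro z w hzw
    exact Subtype.ext (hS z.2 w.2 (congrArg Subtype.val hzw))
  · exact (𝒢.etale_r.continuous.comp continuous_subtype_val).subtype_mk _

theorem isCc_ind {A : Set G} (hAc : IsCompact A) (hAo : IsOpen A)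
    (hAr : Set.InjOn 𝒢.r A) : IsCc (ind A) := by
  refine ⟨A, hAo, t2_of_injOn_r hAr, ?_, ?_, ?_⟩
  · have : (fun x : A => ind A x.1) = fun _ => (1 : ℤ) :=
      funext fun x => ind_of_mem x.2
    rw [this]
    exact continuous_const
  · rw [supp_ind]; exact hAc
  · rw [supp_ind]

/-- The pointwise product set of two subsets of the groupoid. -/
def prodSet (𝒢 : AmpleGroupoid G) (A B : Set G) : Set G :=
  {x : G | ∃ a b, a ∈ A ∧ b ∈ B ∧ 𝒢.s a = 𝒢.r b ∧ 𝒢.mul' a b = x}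

theorem finsum_mem_eq_single {α : Type v} (f : α → ℤ) (S : Set α) (a : α)
    (ha : a ∈ S) (h : ∀ x ∈ S, x ≠ a → f x = 0) : (∑ᶠ x ∈ S, f x) = f a := by
  rw [finsum_mem_def, finsum_eq_single _ a fun x hx => ?_, Set.indicator_of_mem ha]
  by_cases hxS : x ∈ S
  · rw [Set.indicator_of_mem hxS]; exact h x hxS hx
  · exact Set.indicator_of_notMem hxS f

theorem conv'_ind {A : Set G} (hAr : Set.InjOn 𝒢.r A) (B : Set G) :
    𝒢.conv' (ind A) (ind B) = ind (𝒢.prodSet A B) := by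
  funext x
  rw [conv'_apply]
  by_cases hx : ∃ a ∈ A, 𝒢.r a = 𝒢.r x
  · obtain ⟨a, haA, har⟩ := hx
    have hg₀S : 𝒢.s (𝒢.inv a) = 𝒢.r x := by rw [𝒢.s_inv, har]
    have hzero : ∀ g ∈ {g : G | 𝒢.s g = 𝒢.r x}, g ≠ 𝒢.inv a →
        ind A (𝒢.inv g) * ind B (𝒢.mul' g x) = 0 := by
      intro g hgS hga
      have : ind A (𝒢.inv g) = 0 := by
        apply ind_of_not_mem
        intro hmem
        apply hga
        have h2 : 𝒢.inv g = a := hAr hmem haA (by rw [𝒢.r_inv, hgS, har])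
        rw [← h2, inv_inv']
      rw [this, zero_mul]
    rw [finsum_mem_eq_single _ {g : G | 𝒢.s g = 𝒢.r x} (𝒢.inv a) hg₀S hzero, inv_inv', ind_of_mem haA, one_mul]
    by_cases hB : 𝒢.mul' (𝒢.inv a) x ∈ B
    · have hxV : x ∈ 𝒢.prodSet A B := by
        refine ⟨a, 𝒢.mul' (𝒢.inv a) x, haA, hB, by rw [r_mul' hg₀S, 𝒢.r_inv], ?_⟩
        exact inv_mul'_cancel har
      rw [ind_of_mem hB, ind_of_mem hxV]
    · have hxV : x ∉ 𝒢.prodSet A B := by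
        rintro ⟨a', b, ha', hb, hc, rfl⟩
        apply hB
        have haa : a' = a := hAr ha' haA (by rw [har, r_mul' hc])
        subst haa
        rw [mul'_inv_cancel hc]
        exact hb
      rw [ind_of_not_mem hB, ind_of_not_mem hxV]
  · have h0 : Set.EqOn (fun g => ind A (𝒢.inv g) * ind B (𝒢.mul' g x)) 0
        {g : G | 𝒢.s g = 𝒢.r x} := by
      intro g hgS
      have : ind A (𝒢.inv g) = 0 := by
        apply ind_of_not_mem
        intro hmem
        exact hx ⟨𝒢.inv g, hmem, by rw [𝒢.r_inv]; exact hgS⟩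
      simp only [Pi.zero_apply, this, zero_mul]
    rw [finsum_mem_of_eqOn_zero h0]
    have hxV : x ∉ 𝒢.prodSet A B := by
      rintro ⟨a, b, ha, hb, hc, rfl⟩
      exact hx ⟨a, ha, (r_mul' hc).symm⟩
    rw [ind_of_not_mem hxV]

end AmpleGroupoid

namespace AmpleGroupoid

variable {𝒢 : AmpleGroupoid G}

theorem prodSet_injOn {A B : Set G} (hA : Set.InjOn 𝒢.r A) (hB : Set.InjOn 𝒢.r B) :
    Set.InjOn 𝒢.r (𝒢.prodSet A B) := by
  rintro x ⟨a, b, ha, hb, hc, rfl⟩ y ⟨a', b', ha', hb', hc', rfl⟩ hr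
  have haa : a = a' := hA ha ha' (by rw [← r_mul' hc, ← r_mul' hc', hr])
  subst haa
  have hbb : b = b' := hB hb hb' (by rw [← hc, ← hc'])
  subst hbb
  rfl

theorem prodSet_compact {A B : Set G} (hA : IsCompact A) (hB : IsCompact B) :
    IsCompact (𝒢.prodSet A B) := by
  haveI := 𝒢.t2_units
  have hscont : Continuous 𝒢.s := 𝒢.etale_s.continuous
  have hrcont : Continuous 𝒢.r := 𝒢.etale_r.continuous
  have hFcont : Continuous (fun p : G × G =>
      ((⟨𝒢.s p.1, 𝒢.s_s p.1⟩ : {x : G // 𝒢.s x = x}),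
       (⟨𝒢.r p.2, 𝒢.s_r p.2⟩ : {x : G // 𝒢.s x = x}))) :=
    ((hscont.comp continuous_fst).subtype_mk _).prodMk
      ((hrcont.comp continuous_snd).subtype_mk _)
  have hDclosed : IsClosed {p : G × G | 𝒢.s p.1 = 𝒢.r p.2} := by
    have heq : {p : G × G | 𝒢.s p.1 = 𝒢.r p.2} = (fun p : G × G =>
        ((⟨𝒢.s p.1, 𝒢.s_s p.1⟩ : {x : G // 𝒢.s x = x}),
         (⟨𝒢.r p.2, 𝒢.s_r p.2⟩ : {x : G // 𝒢.s x = x}))) ⁻¹'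
          (Set.diagonal {x : G // 𝒢.s x = x}) := by
      ext p
      simp [Set.mem_diagonal_iff, Subtype.ext_iff]
    rw [heq]
    exact isClosed_diagonal.preimage hFcont
  have hD : IsCompact ((A ×ˢ B) ∩ {p : G × G | 𝒢.s p.1 = 𝒢.r p.2}) :=
    (hA.prod hB).inter_right hDclosed
  have hD' : IsCompact (Subtype.val ⁻¹' (A ×ˢ B) : Set {p : G × G // 𝒢.s p.1 = 𝒢.r p.2}) := by
    rw [Subtype.isCompact_iff]
    have himg2 : (Subtype.val '' (Subtype.val ⁻¹' (A ×ˢ B) :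
        Set {p : G × G // 𝒢.s p.1 = 𝒢.r p.2}))
        = (A ×ˢ B) ∩ {p : G × G | 𝒢.s p.1 = 𝒢.r p.2} := by
      ext p
      constructor
      · rintro ⟨⟨q, hq⟩, hmem, rfl⟩
        exact ⟨hmem, hq⟩
      · rintro ⟨hab, hpc⟩
        exact ⟨⟨p, hpc⟩, hab, rfl⟩
    rw [himg2]
    exact hD
  have himg : (fun p : {p : G × G // 𝒢.s p.1 = 𝒢.r p.2} => 𝒢.mul p.1.1 p.1.2 p.2) ''
      (Subtype.val ⁻¹' (A ×ˢ B)) = 𝒢.prodSet A B := by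
    ext x
    constructor
    · rintro ⟨⟨⟨a, b⟩, hc⟩, hab, rfl⟩
      exact ⟨a, b, hab.1, hab.2, hc, mul'_def hc⟩
    · rintro ⟨a, b, ha, hb, hc, rfl⟩
      exact ⟨⟨(a, b), hc⟩, ⟨ha, hb⟩, (mul'_def hc).symm⟩
  rw [← himg]
  exact hD'.image 𝒢.continuous_mul

theorem prodSet_open {A B : Set G} (hAo : IsOpen A) (hBo : IsOpen B) :
    IsOpen (𝒢.prodSet A B) := by
  rw [isOpen_iff_forall_mem_open]
  rintro x ⟨a, b, haA, hbB, hc, rfl⟩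
  obtain ⟨e, hae, her⟩ := 𝒢.etale_r a
  set N := e.source ∩ A with hN
  have hNo : IsOpen N := e.open_source.inter hAo
  have hNsub : N ⊆ e.source := Set.inter_subset_left
  have heNo : IsOpen (e '' N) := by
    rw [e.image_eq_target_inter_inv_preimage hNsub]
    exact e.continuousOn_symm.isOpen_inter_preimage e.open_target hNo
  set O := 𝒢.r ⁻¹' (e '' N) with hO
  have hOo : IsOpen O := heNo.preimage 𝒢.etale_r.continuous
  have hmem_target : ∀ z : O, 𝒢.r z.1 ∈ e.target := fun z => by
    obtain ⟨n, hnN, hn⟩ := z.2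
    rw [← hn]; exact e.map_source (hNsub hnN)
  have hsymm_mem : ∀ z : O, e.symm (𝒢.r z.1) ∈ N := fun z => by
    obtain ⟨n, hnN, hn⟩ := z.2
    rw [← hn, e.left_inv (hNsub hnN)]; exact hnN
  have hrr : ∀ z : O, 𝒢.r (e.symm (𝒢.r z.1)) = 𝒢.r z.1 := fun z => by
    rw [show 𝒢.r (e.symm (𝒢.r z.1)) = e (e.symm (𝒢.r z.1)) from congrFun her _]
    exact e.right_inv (hmem_target z)
  have hcont2 : Continuous (fun z : O => e.symm (𝒢.r z.1)) :=
    e.continuousOn_symm.comp_continuous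
      (𝒢.etale_r.continuous.comp continuous_subtype_val) hmem_target
  set Φ : O → G := fun z => 𝒢.mul' (𝒢.inv (e.symm (𝒢.r z.1))) z.1 with hΦ
  have hΦcont : Continuous Φ := by
    have heq : Φ = (fun p : {p : G × G // 𝒢.s p.1 = 𝒢.r p.2} => 𝒢.mul p.1.1 p.1.2 p.2) ∘
        (fun z : O => (⟨(𝒢.inv (e.symm (𝒢.r z.1)), z.1),
          by rw [𝒢.s_inv]; exact hrr z⟩ : {p : G × G // 𝒢.s p.1 = 𝒢.r p.2})) := by
      funext z
      exact mul'_def _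
    rw [heq]
    exact 𝒢.continuous_mul.comp
      (Continuous.subtype_mk ((𝒢.continuous_inv.comp hcont2).prodMk continuous_subtype_val) _)
  refine ⟨Subtype.val '' (Φ ⁻¹' B), ?_, ?_, ?_⟩
  · rintro z ⟨y, hyB, rfl⟩
    have huA : e.symm (𝒢.r y.1) ∈ A := (hsymm_mem y).2
    have hcy : 𝒢.s (𝒢.inv (e.symm (𝒢.r y.1))) = 𝒢.r y.1 := by rw [𝒢.s_inv]; exact hrr y
    refine ⟨e.symm (𝒢.r y.1), Φ y, huA, hyB, by rw [hΦ, r_mul' hcy, 𝒢.r_inv], ?_⟩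
    exact inv_mul'_cancel (hrr y)
  · exact hOo.isOpenMap_subtype_val _ (hBo.preimage hΦcont)
  · have hxO : 𝒢.mul' a b ∈ O := by
      show 𝒢.r (𝒢.mul' a b) ∈ e '' N
      rw [r_mul' hc]
      exact ⟨a, ⟨hae, haA⟩, (congrFun her a).symm⟩
    refine ⟨⟨𝒢.mul' a b, hxO⟩, ?_, rfl⟩
    show Φ ⟨𝒢.mul' a b, hxO⟩ ∈ B
    have hsymm : e.symm (𝒢.r (𝒢.mul' a b)) = a := by
      rw [r_mul' hc, show 𝒢.r a = e a from congrFun her a, e.left_inv hae]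
    rw [hΦ]
    simp only [hsymm]
    rw [mul'_inv_cancel hc]
    exact hbB

end AmpleGroupoid

namespace AmpleGroupoid

variable {𝒢 : AmpleGroupoid G}

theorem units_open (𝒢 : AmpleGroupoid G) : IsOpen {x : G | 𝒢.s x = x} := by
  rw [isOpen_iff_forall_mem_open]
  intro u hu
  obtain ⟨e, hue, hes⟩ := 𝒢.etale_s u
  refine ⟨e.source ∩ 𝒢.s ⁻¹' e.source, ?_,
    e.open_source.inter (e.open_source.preimage 𝒢.etale_s.continuous),
    ⟨hue, by rw [Set.mem_preimage, hu]; exact hue⟩⟩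
  rintro x ⟨hx1, hx2⟩
  show 𝒢.s x = x
  exact e.injOn hx2 hx1 (by rw [← congrFun hes (𝒢.s x), ← congrFun hes x]; exact 𝒢.s_s x)

theorem exists_compact_open_nbhd (𝒢 : AmpleGroupoid G) {u : G} (hu : 𝒢.s u = u)
    {O : Set G} (hOo : IsOpen O) (huO : u ∈ O) :
    ∃ D : Set G, IsCompact D ∧ IsOpen D ∧ u ∈ D ∧ D ⊆ O := by
  haveI := 𝒢.t2_units
  haveI := 𝒢.lch_units
  haveI := 𝒢.td_units
  set O' : Set {x : G // 𝒢.s x = x} := Subtype.val ⁻¹' O with hO'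
  have hO'o : IsOpen O' := hOo.preimage continuous_subtype_val
  have huO' : (⟨u, hu⟩ : {x : G // 𝒢.s x = x}) ∈ O' := huO
  obtain ⟨K, hKc, huK, hKO⟩ := exists_compact_subset hO'o huO'
  obtain ⟨V, hVclopen, huV, hVK⟩ :=
    (loc_compact_Haus_tot_disc_of_zero_dim (H := {x : G // 𝒢.s x = x})).mem_nhds_iff.1
      (isOpen_interior.mem_nhds huK)
  have hVc : IsCompact V := hKc.of_isClosed_subset hVclopen.isClosed
    (hVK.trans interior_subset)
  refine ⟨Subtype.val '' V, hVc.image continuous_subtype_val, ?_,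
    ⟨⟨u, hu⟩, huV, rfl⟩, ?_⟩
  · exact 𝒢.units_open.isOpenMap_subtype_val _ hVclopen.isOpen
  · rintro x ⟨v, hvV, rfl⟩
    exact hKO (interior_subset (hVK hvV))

theorem exists_rinj_nbhd (𝒢 : AmpleGroupoid G) (g : G) {W : Set G}
    (hWo : IsOpen W) (hgW : g ∈ W) :
    ∃ N : Set G, IsCompact N ∧ IsOpen N ∧ Set.InjOn 𝒢.r N ∧ g ∈ N ∧ N ⊆ W := by
  obtain ⟨e, hge, her⟩ := 𝒢.etale_r g
  obtain ⟨e', hge', hes⟩ := 𝒢.etale_s g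
  set M := e.source ∩ e'.source ∩ W with hM
  have hMo : IsOpen M := (e.open_source.inter e'.open_source).inter hWo
  have hgM : g ∈ M := ⟨⟨hge, hge'⟩, hgW⟩
  have hMsub' : M ⊆ e'.source := fun x hx => hx.1.2
  have heMo : IsOpen (e' '' M) := by
    rw [e'.image_eq_target_inter_inv_preimage hMsub']
    exact e'.continuousOn_symm.isOpen_inter_preimage e'.open_target hMo
  have hsgM : 𝒢.s g ∈ e' '' M := ⟨g, hgM, (congrFun hes g).symm⟩
  obtain ⟨D, hDc, hDo, hsgD, hDsub⟩ := 𝒢.exists_compact_open_nbhd (𝒢.s_s g) heMo hsgM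
  have hDt : D ⊆ e'.target := hDsub.trans (by
    rintro y ⟨m, hmM, rfl⟩
    exact e'.map_source (hMsub' hmM))
  have hsubM : e'.symm '' D ⊆ M := by
    rintro y ⟨d, hdD, rfl⟩
    obtain ⟨m, hmM, rfl⟩ := hDsub hdD
    rw [e'.left_inv (hMsub' hmM)]
    exact hmM
  refine ⟨e'.symm '' D, ?_, ?_, ?_, ?_, ?_⟩
  · exact hDc.image_of_continuousOn (e'.continuousOn_symm.mono hDt)
  · rw [e'.symm_image_eq_source_inter_preimage hDt]
    exact e'.continuousOn.isOpen_inter_preimage e'.open_source hDo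
  · intro x hx y hy hxy
    apply e.injOn (hsubM hx).1.1 (hsubM hy).1.1
    rw [← congrFun her x, ← congrFun her y]
    exact hxy
  · exact ⟨𝒢.s g, hsgD, by rw [congrFun hes g]; exact e'.left_inv hge'⟩
  · exact fun x hx => (hsubM hx).2

theorem compact_inter_of_subset_t2 {U S T : Set G} (hU2 : T2Space U)
    (hS : IsCompact S) (hT : IsCompact T) (hSU : S ⊆ U) (hTU : T ⊆ U) :
    IsCompact (S ∩ T) := by
  haveI := hU2
  have key : ∀ X : Set G, X ⊆ U → IsCompact X → IsCompact (Subtype.val ⁻¹' X : Set U) := by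
    intro X hXU hX
    rw [Subtype.isCompact_iff]
    have : Subtype.val '' (Subtype.val ⁻¹' X : Set U) = X := by
      ext x
      constructor
      · rintro ⟨⟨y, hyU⟩, hmem, rfl⟩
        exact hmem
      · intro hx
        exact ⟨⟨x, hXU hx⟩, hx, rfl⟩
    rw [this]
    exact hX
  have hint := (key S hSU hS).inter (key T hTU hT)
  have himg : Subtype.val '' ((Subtype.val ⁻¹' S) ∩ (Subtype.val ⁻¹' T) : Set U) = S ∩ T := by
    ext x
    constructor
    · rintro ⟨⟨y, hyU⟩, ⟨h1, h2⟩, rfl⟩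
      exact ⟨h1, h2⟩
    · rintro ⟨h1, h2⟩
      exact ⟨⟨x, hSU h1⟩, ⟨h1, h2⟩, rfl⟩
  rw [← himg]
  exact hint.image continuous_subtype_val

/-- The generating set: indicators of compact open sets on which `r` is injective. -/
def Bset (𝒢 : AmpleGroupoid G) : Set (G → ℤ) :=
  {f | ∃ A : Set G, IsCompact A ∧ IsOpen A ∧ Set.InjOn 𝒢.r A ∧ f = ind A}

theorem ind_union (X Y : Set G) : ind (X ∪ Y) = ind X + ind Y - ind (X ∩ Y) := by
  funext z
  by_cases hx : z ∈ X <;> by_cases hy : z ∈ Y <;>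
    simp [ind, Set.indicator_apply, hx, hy]

theorem ind_biUnion_mem {U : Set G} (hU2 : T2Space U) (t : Finset G) :
    ∀ N : G → Set G, (∀ i ∈ t, IsCompact (N i) ∧ IsOpen (N i) ∧ Set.InjOn 𝒢.r (N i) ∧ N i ⊆ U) →
    ind (⋃ i ∈ t, N i) ∈ AddSubgroup.closure (Bset 𝒢) := by
  classical
  induction t using Finset.induction_on with
  | empty =>
      intro N _
      have h0 : (⋃ i ∈ (∅ : Finset G), N i) = (∅ : Set G) := by simp
      have h1 : ind (∅ : Set G) = 0 := funext fun z => ind_of_not_mem (Set.notMem_empty z)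
      rw [h0, h1]
      exact zero_mem _
  | @insert j t hj ih =>
      intro N hN
      have hins : (⋃ i ∈ insert j t, N i) = N j ∪ ⋃ i ∈ t, N i := by
        simp [Set.biUnion_insert]
      obtain ⟨hjc, hjo, hjr, hjU⟩ := hN j (Finset.mem_insert_self j t)
      have h1 : ind (N j) ∈ AddSubgroup.closure (Bset 𝒢) :=
        AddSubgroup.subset_closure ⟨N j, hjc, hjo, hjr, rfl⟩
      have h2 : ind (⋃ i ∈ t, N i) ∈ AddSubgroup.closure (Bset 𝒢) :=
        ih N (fun i hi => hN i (Finset.mem_insert_of_mem hi))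
      have h3 : N j ∩ (⋃ i ∈ t, N i) = ⋃ i ∈ t, (N j ∩ N i) := by
        rw [Set.inter_iUnion₂]
      have h4 : ind (N j ∩ ⋃ i ∈ t, N i) ∈ AddSubgroup.closure (Bset 𝒢) := by
        rw [h3]
        refine ih (fun i => N j ∩ N i) (fun i hi => ?_)
        obtain ⟨hic, hio, hir, hiU⟩ := hN i (Finset.mem_insert_of_mem hi)
        exact ⟨compact_inter_of_subset_t2 hU2 hjc hic hjU hiU,
          hjo.inter hio, hir.mono Set.inter_subset_right,
          Set.inter_subset_right.trans hiU⟩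
      rw [hins, ind_union]
      exact sub_mem (add_mem h1 h2) h4

theorem ind_mem_closure_Bset {U P : Set G} (hU2 : T2Space U) (hPc : IsCompact P)
    (hPo : IsOpen P) (hPU : P ⊆ U) : ind P ∈ AddSubgroup.closure (Bset 𝒢) := by
  classical
  have hex : ∀ x : G, ∃ N : Set G, x ∈ P →
      (IsCompact N ∧ IsOpen N ∧ Set.InjOn 𝒢.r N ∧ x ∈ N ∧ N ⊆ P) := by
    intro x
    by_cases hx : x ∈ P
    · obtain ⟨N, h⟩ := 𝒢.exists_rinj_nbhd x hPo hx
      exact ⟨N, fun _ => h⟩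
    · exact ⟨∅, fun h => absurd h hx⟩
  choose N hN using hex
  obtain ⟨t, htP, hcov⟩ := hPc.elim_nhds_subcover N
    (fun x hx => ((hN x hx).2.1).mem_nhds (hN x hx).2.2.2.1)
  have hPeq : P = ⋃ i ∈ t, N i :=
    subset_antisymm hcov (Set.iUnion₂_subset fun i hi => (hN i (htP i hi)).2.2.2.2)
  rw [hPeq]
  refine ind_biUnion_mem hU2 t N (fun i hi => ?_)
  obtain ⟨h1, h2, h3, h4, h5⟩ := hN i (htP i hi)
  exact ⟨h1, h2, h3, h5.trans hPU⟩

end AmpleGroupoid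

namespace AmpleGroupoid

variable {𝒢 : AmpleGroupoid G}

theorem isCc_mem_closure {f : G → ℤ} (hf : IsCc f) :
    f ∈ AddSubgroup.closure (Bset 𝒢) := by
  classical
  obtain ⟨U, hUo, hU2, hcont, hcomp, hsub⟩ := hf
  haveI := hU2
  have hcontOn : ContinuousOn f U := by
    rw [continuousOn_iff_continuous_restrict]
    exact hcont
  have hvals : (f '' support f).Finite := by
    have hcompImg : IsCompact (f '' support f) :=
      hcomp.image_of_continuousOn (hcontOn.mono hsub)
    exact hcompImg.finite_of_discrete
  set V := hvals.toFinset.erase 0 with hV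
  set P : ℤ → Set G := fun n => Subtype.val '' ((fun x : U => f x) ⁻¹' {n}) with hP
  have hPmem : ∀ (n : ℤ) (x : G), x ∈ P n ↔ (x ∈ U ∧ f x = n) := by
    intro n x
    constructor
    · rintro ⟨⟨y, hyU⟩, hy, rfl⟩
      exact ⟨hyU, hy⟩
    · rintro ⟨hxU, hfx⟩
      exact ⟨⟨x, hxU⟩, hfx, rfl⟩
  have hPo : ∀ n : ℤ, IsOpen (P n) := fun n =>
    hUo.isOpenMap_subtype_val _ (IsOpen.preimage hcont (isOpen_discrete _))
  have hPU : ∀ n : ℤ, P n ⊆ U := fun n x hx => ((hPmem n x).1 hx).1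
  have hPc : ∀ n : ℤ, n ≠ 0 → IsCompact (P n) := by
    intro n hn
    have heq : P n = support f \ (Subtype.val '' ((fun x : U => f x) ⁻¹' ({n}ᶜ))) := by
      ext x
      constructor
      · intro hx
        obtain ⟨hxU, hfx⟩ := (hPmem n x).1 hx
        refine ⟨by rw [mem_support, hfx]; exact hn, ?_⟩
        rintro ⟨⟨y, hyU⟩, hy, rfl⟩
        exact hy hfx
      · rintro ⟨hxs, hximg⟩
        have hxU : x ∈ U := hsub hxs
        refine (hPmem n x).2 ⟨hxU, ?_⟩
        by_contra hne
        exact hximg ⟨⟨x, hxU⟩, hne, rfl⟩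
    rw [heq]
    exact hcomp.diff (hUo.isOpenMap_subtype_val _ (IsOpen.preimage hcont (isOpen_discrete _)))
  have hdecomp : f = ∑ n ∈ V, n • ind (P n) := by
    funext x
    rw [Finset.sum_apply]
    by_cases hx : f x = 0
    · rw [hx]
      symm
      apply Finset.sum_eq_zero
      intro n hn
      have hnne : n ≠ 0 := (Finset.mem_erase.1 hn).1
      have hnot : x ∉ P n := fun hmem => hnne (by rw [← ((hPmem n x).1 hmem).2, hx])
      simp [ind_of_not_mem hnot]
    · symm
      have hxV : f x ∈ V :=
        Finset.mem_erase.2 ⟨hx, hvals.mem_toFinset.2 ⟨x, hx, rfl⟩⟩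
      rw [Finset.sum_eq_single (f x)]
      · have hxP : x ∈ P (f x) := (hPmem _ x).2 ⟨hsub hx, rfl⟩
        rw [Pi.smul_apply, ind_of_mem hxP, smul_eq_mul, mul_one]
      · intro n hn hne
        have hnot : x ∉ P n := fun hmem => hne ((hPmem n x).1 hmem).2.symm
        rw [Pi.smul_apply, ind_of_not_mem hnot, smul_eq_mul, mul_zero]
      · intro h
        exact absurd hxV h
  rw [hdecomp]
  refine sum_mem fun n hn => ?_
  exact zsmul_mem (ind_mem_closure_Bset hU2 (hPc n (Finset.mem_erase.1 hn).1)
    (hPo n) (hPU n)) n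

theorem ZSpan_eq (𝒢 : AmpleGroupoid G) : ZSpan G = AddSubgroup.closure (Bset 𝒢) := by
  apply le_antisymm
  · exact (AddSubgroup.closure_le _).2 fun f hf => isCc_mem_closure hf
  · refine (AddSubgroup.closure_le _).2 ?_
    rintro f ⟨A, hAc, hAo, hAr, rfl⟩
    exact AddSubgroup.subset_closure (isCc_ind hAc hAo hAr)

theorem conv'_mem {ξ η : G → ℤ} (hξ : ξ ∈ ZSpan G) (hη : η ∈ ZSpan G) :
    𝒢.conv' ξ η ∈ ZSpan G := by
  have hξ' : ξ ∈ AddSubgroup.closure (Bset 𝒢) := by rw [← ZSpan_eq]; exact hξ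
  clear hξ
  induction hξ' using AddSubgroup.closure_induction with
  | mem f hf =>
      obtain ⟨A, hAc, hAo, hAr, rfl⟩ := hf
      have hη' : η ∈ AddSubgroup.closure (Bset 𝒢) := by rw [← ZSpan_eq]; exact hη
      have hindA : ind A ∈ ZSpan G :=
        AddSubgroup.subset_closure (isCc_ind hAc hAo hAr)
      clear hη
      induction hη' using AddSubgroup.closure_induction with
      | mem f2 hf2 =>
          obtain ⟨B, hBc, hBo, hBr, rfl⟩ := hf2
          rw [conv'_ind hAr]
          exact AddSubgroup.subset_closure
            (isCc_ind (prodSet_compact hAc hBc) (prodSet_open hAo hBo)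
              (prodSet_injOn hAr hBr))
      | zero =>
          rw [conv'_zero_right]
          exact zero_mem _
      | add f2 g2 hf2 hg2 ih1 ih2 =>
          rw [conv'_add_right (rFF_of_mem hindA)]
          exact add_mem ih1 ih2
      | neg f2 hf2 ih =>
          rw [conv'_neg_right]
          exact neg_mem ih
  | zero =>
      rw [conv'_zero_left]
      exact zero_mem _
  | add f1 g1 hf1 hg1 ih1 ih2 =>
      have h1 : f1 ∈ ZSpan G := by rw [ZSpan_eq]; exact hf1
      have h2 : g1 ∈ ZSpan G := by rw [ZSpan_eq]; exact hg1
      rw [conv'_add_left (rFF_of_mem h1) (rFF_of_mem h2)]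
      exact add_mem ih1 ih2
  | neg f1 hf1 ih =>
      rw [conv'_neg_left]
      exact neg_mem ih

end AmpleGroupoid

/-- convolution makes ℤ[G] an associative ring: ℤ[G] is closed under
convolution, convolution is associative and (bi-)additive on ℤ[G]. -/
theorem stmt_5 (G : Type u) [TopologicalSpace G] (𝒢 : AmpleGroupoid G) :
    (∀ ξ η : G → ℤ, ξ ∈ ZSpan G → η ∈ ZSpan G → conv 𝒢 ξ η ∈ ZSpan G) ∧
    (∀ ξ η ζ : G → ℤ, ξ ∈ ZSpan G → η ∈ ZSpan G → ζ ∈ ZSpan G →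
      conv 𝒢 (conv 𝒢 ξ η) ζ = conv 𝒢 ξ (conv 𝒢 η ζ)) ∧
    (∀ ξ η ζ : G → ℤ, ξ ∈ ZSpan G → η ∈ ZSpan G → ζ ∈ ZSpan G →
      conv 𝒢 (ξ + η) ζ = conv 𝒢 ξ ζ + conv 𝒢 η ζ) ∧
    (∀ ξ η ζ : G → ℤ, ξ ∈ ZSpan G → η ∈ ZSpan G → ζ ∈ ZSpan G →
      conv 𝒢 ξ (η + ζ) = conv 𝒢 ξ η + conv 𝒢 ξ ζ) := by
  refine ⟨?_, ?_, ?_, ?_⟩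
  · intro ξ η hξ hη
    rw [AmpleGroupoid.conv_eq_conv']
    exact AmpleGroupoid.conv'_mem hξ hη
  · intro ξ η ζ hξ hη hζ
    simp only [AmpleGroupoid.conv_eq_conv']
    exact AmpleGroupoid.conv'_assoc (AmpleGroupoid.rFF_of_mem hξ)
      (AmpleGroupoid.sFF_of_mem hζ) η
  · intro ξ η ζ hξ hη hζ
    simp only [AmpleGroupoid.conv_eq_conv']
    exact AmpleGroupoid.conv'_add_left (AmpleGroupoid.rFF_of_mem hξ)
      (AmpleGroupoid.rFF_of_mem hη) ζ
  · intro ξ η ζ hξ hη hζ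
    simp only [AmpleGroupoid.conv_eq_conv']
    exact AmpleGroupoid.conv'_add_right (AmpleGroupoid.rFF_of_mem hξ) η ζ
end
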